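/- If A and B are symmetric real-valued multilinear maps of ranks r and s respectively on a vector space E, and the symmetrization of A ⊗ B is zero, then A = 0 or B = 0. -/

import Mathlib

/-!
Along a line `x + t • (y - x)` the diagonal `x ↦ f (x, …, x)` of a multilinear form is a polynomial
in `t`. On the diagonal, the symmetrization of `A ⊗ B` is `A (x, …, x) * B (x, …, x)`. If
`A (x, …, x) ≠ 0` and `B (y, …, y) ≠ 0`, the two polynomials along the line from `x` to `y` are
nonzero but their product vanishes identically, which is impossible over an infinite domain. So one
of the diagonals vanishes, and a symmetric form with vanishing diagonal is zero: the linear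
coefficient of `t ↦ f (x + t • u, …, x + t • u)` is `n * f (u, x, …, x)`, so the symmetric form
`f (u, ·, …, ·)` of rank `n - 1` has vanishing diagonal too, and induction on `n` applies.
-/

open Polynomial Finset Function

namespace MultilinearMap

variable {R M : Type*} [CommRing R] [AddCommGroup M] [Module R M]

def IsSymmetric {ι : Type*} (f : MultilinearMap R (fun _ : ι => M) R) : Prop :=
  ∀ (v : ι → M) (σ : Equiv.Perm ι), f (v ∘ σ) = f v

section LinePolynomial

variable {ι : Type*} [Fintype ι] [DecidableEq ι] {M₁ : ι → Type*} [∀ i, AddCommGroup (M₁ i)]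
  [∀ i, Module R (M₁ i)]

noncomputable def linePolynomial (f : MultilinearMap R M₁ R) (a b : ∀ i, M₁ i) : R[X] :=
  ∑ S : Finset ι, C (f (S.piecewise b a)) * X ^ #S

theorem eval_linePolynomial (f : MultilinearMap R M₁ R) (a b : ∀ i, M₁ i) (t : R) :
    (f.linePolynomial a b).eval t = f (a + t • b) := by
  rw [add_comm, f.map_add_univ, linePolynomial, eval_finsetSum]
  refine sum_congr rfl fun S _ => ?_
  have hpiece : S.piecewise (t • b) a =
      S.piecewise (fun i => t • S.piecewise b a i) (S.piecewise b a) := by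
    ext i; by_cases h : i ∈ S <;> simp [h]
  rw [hpiece, f.map_piecewise_smul, eval_mul, eval_C, eval_pow, eval_X, prod_const, smul_eq_mul,
    mul_comm]

theorem coeff_one_linePolynomial (f : MultilinearMap R M₁ R) (a b : ∀ i, M₁ i) :
    (f.linePolynomial a b).coeff 1 = ∑ i, f (update a i (b i)) := by
  simp only [linePolynomial, finsetSum_coeff, coeff_C_mul_X_pow]
  have hsingletons : univ.filter (fun S : Finset ι => 1 = #S) = powersetCard 1 univ := by
    ext; simp [eq_comm]
  rw [← sum_filter, hsingletons, powersetCard_one, sum_map]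
  simp only [Embedding.coeFn_mk, piecewise_singleton]

end LinePolynomial

namespace IsSymmetric

theorem map_update_const {ι : Type*} [DecidableEq ι] {f : MultilinearMap R (fun _ : ι => M) R}
    (hf : f.IsSymmetric) (x u : M) (i j : ι) :
    f (update (fun _ => x) i u) = f (update (fun _ => x) j u) := by
  rw [← hf _ (Equiv.swap i j), update_comp_equiv]
  simp [Function.comp_def]

theorem curryLeft {n : ℕ} {f : MultilinearMap R (fun _ : Fin (n + 1) => M) R}
    (hf : f.IsSymmetric) (u : M) : (f.curryLeft u).IsSymmetric := by
  intro w σ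
  rw [curryLeft_apply, curryLeft_apply,
    ← hf (Fin.cons u w) (Equiv.Perm.decomposeFin.symm (0, σ))]
  congr 1
  ext i
  cases i using Fin.cases <;> simp [Equiv.Perm.decomposeFin_symm_apply_succ]

variable [IsDomain R] [CharZero R]

theorem map_cons_const_eq_zero {n : ℕ} {f : MultilinearMap R (fun _ : Fin (n + 1) => M) R}
    (hf : f.IsSymmetric) (hdiag : ∀ x, f (fun _ => x) = 0) (u x : M) :
    f (Fin.cons u fun _ => x) = 0 := by
  have hline : f.linePolynomial (fun _ => x) (fun _ => u) = 0 :=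
    Polynomial.funext fun t => by rw [eval_linePolynomial, eval_zero]; exact hdiag (x + t • u)
  have hcoeff := congrArg (coeff · 1) hline
  simp only [coeff_one_linePolynomial, coeff_zero, hf.map_update_const x u _ 0, sum_const,
    card_univ, Fintype.card_fin, smul_eq_zero, Nat.add_one_ne_zero, false_or] at hcoeff
  have hcons : (Fin.cons u fun _ => x : Fin (n + 1) → M) = update (fun _ => x) 0 u := by
    ext i; cases i using Fin.cases <;> simp
  rwa [hcons]

theorem eq_zero {n : ℕ} {f : MultilinearMap R (fun _ : Fin n => M) R}
    (hf : f.IsSymmetric) (hdiag : ∀ x, f (fun _ => x) = 0) : f = 0 := by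
  induction n with
  | zero =>
    ext v
    rw [Subsingleton.elim v fun _ => 0]
    exact hdiag 0
  | succ n ih =>
    ext v
    have hcurry : f.curryLeft (v 0) = 0 :=
      ih (hf.curryLeft (v 0)) fun x => by rw [curryLeft_apply, hf.map_cons_const_eq_zero hdiag]
    rw [← Fin.cons_self_tail v, ← curryLeft_apply, hcurry]
    rfl

end IsSymmetric

theorem diag_eq_zero_or_diag_eq_zero_of_mul_eq_zero [IsDomain R] [Infinite R] {ι κ : Type*}
    [Fintype ι] [Fintype κ] (A : MultilinearMap R (fun _ : ι => M) R)
    (B : MultilinearMap R (fun _ : κ => M) R) (h : ∀ x, A (fun _ => x) * B (fun _ => x) = 0) :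
    (∀ x, A (fun _ => x) = 0) ∨ ∀ y, B (fun _ => y) = 0 := by
  classical
  by_contra! ⟨⟨x, hx⟩, y, hy⟩
  have hprod : A.linePolynomial (fun _ => x) (fun _ => y - x) *
      B.linePolynomial (fun _ => x) (fun _ => y - x) = 0 :=
    Polynomial.funext fun t => by
      rw [eval_mul, eval_linePolynomial, eval_linePolynomial, eval_zero]
      exact h (x + t • (y - x))
  rcases mul_eq_zero.1 hprod with hA | hB
  · exact hx (by simpa [eval_linePolynomial] using congrArg (Polynomial.eval 0) hA)
  · exact hy (by simpa [eval_linePolynomial, Pi.add_def] using congrArg (Polynomial.eval 1) hB)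

end MultilinearMap

/-- If `A` and `B` are symmetric real-valued multilinear maps of ranks `r` and `s` on a
real vector space `E` and the symmetrization of `A ⊗ B` vanishes (expressed here by the
vanishing of the average over all permutations of the arguments of the rank `r + s`
multilinear map `(v₁,…,v_{r+s}) ↦ A(v₁,…,v_r)·B(v_{r+1},…,v_{r+s})`), then `A = 0` or
`B = 0`. -/
theorem sym_tensor_product_eq_zero
    {E : Type*} [AddCommGroup E] [Module ℝ E]
    {r s : ℕ}
    (A : MultilinearMap ℝ (fun _ : Fin r => E) ℝ)
    (B : MultilinearMap ℝ (fun _ : Fin s => E) ℝ)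
    (hAsym : ∀ (v : Fin r → E) (σ : Equiv.Perm (Fin r)), A (v ∘ σ) = A v)
    (hBsym : ∀ (v : Fin s → E) (σ : Equiv.Perm (Fin s)), B (v ∘ σ) = B v)
    (hSym0 : ∀ v : Fin (r + s) → E,
      (((r + s).factorial : ℝ))⁻¹ *
        ∑ σ : Equiv.Perm (Fin (r + s)),
          A (fun i => v (σ (Fin.castAdd s i))) * B (fun j => v (σ (Fin.natAdd r j))) = 0) :
    A = 0 ∨ B = 0 := by
  have hdiag : ∀ x, A (fun _ => x) * B (fun _ => x) = 0 := fun x => by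
    simpa [Fintype.card_perm, Nat.factorial_ne_zero] using hSym0 fun _ => x
  exact (MultilinearMap.diag_eq_zero_or_diag_eq_zero_of_mul_eq_zero A B hdiag).imp
    (MultilinearMap.IsSymmetric.eq_zero hAsym) (MultilinearMap.IsSymmetric.eq_zero hBsym)
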